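/- Minimal-distance realization via H: Let M be a Kripke model with states v, w and α a program with (v,w) ∈ R_α. Then there exists a pair (X, δ̄) ∈ H_α such that M, v ⊨ ⋀X and d_{δ̄}(v,w) = d_α(v,w), where d_{δ̄} is the distance along the program list δ̄ (d_ε(v,w) = 0 if v=w else ∞; d_{αγ̄}(v,w) = min over u of d_α(v,u) + d_{γ̄}(u,w)). -/

import Mathlib

mutual
inductive Formula : Type
  | bot : Formula
  | atom : ℕ → Formula
  | and : Formula → Formula → Formula
  | neg : Formula → Formula
  | box : Program → Formula → Formula
inductive Program : Type
  | atom : ℕ → Program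
  | test : Formula → Program
  | union : Program → Program → Program
  | comp : Program → Program → Program
  | star : Program → Program
end

structure KripkeModel (W : Type) : Type where
  rel : ℕ → W → W → Prop
  val : W → ℕ → Prop

mutual
def evaluate {W : Type} (M : KripkeModel W) : W → Formula → Prop
  | _, .bot => False
  | w, .atom p => M.val w p
  | w, .and φ ψ => evaluate M w φ ∧ evaluate M w ψ
  | w, .neg φ => ¬ evaluate M w φ
  | w, .box α φ => ∀ v, relate M α w v → evaluate M v φ
def relate {W : Type} (M : KripkeModel W) : Program → W → W → Prop
  | .atom a, w, v => M.rel a w v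
  | .test τ, w, v => w = v ∧ evaluate M w τ
  | .union α β, w, v => relate M α w v ∨ relate M β w v
  | .comp α β, w, v => ∃ u, relate M α w u ∧ relate M β u v
  | .star α, w, v => Relation.ReflTransGen (fun x y => relate M α x y) w v
end

/-- Relation interpreting a list of programs: composition, identity for `[]`. -/
def relateSeq {W : Type} (M : KripkeModel W) : List Program → W → W → Prop
  | [], v, w => v = w
  | α :: δ, v, w => ∃ u, relate M α v u ∧ relateSeq M δ u w

/-- Implication, defined from ¬ and ∧. -/
def Formula.imp (φ ψ : Formula) : Formula := .neg (.and φ (.neg ψ))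

/-- Disjunction, defined from ¬ and ∧. -/
def Formula.disj (φ ψ : Formula) : Formula := .neg (.and (.neg φ) (.neg ψ))

def semImplies (φ ψ : Formula) : Prop :=
  ∀ (W : Type) (M : KripkeModel W) (w : W), evaluate M w φ → evaluate M w ψ

def semEquiv (φ ψ : Formula) : Prop :=
  ∀ (W : Type) (M : KripkeModel W) (w : W), evaluate M w φ ↔ evaluate M w ψ

def valid (φ : Formula) : Prop :=
  ∀ (W : Type) (M : KripkeModel W) (w : W), evaluate M w φ

mutual
/-- Uniform substitution on formulas. -/
def substF (σ : ℕ → Formula) : Formula → Formula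
  | .bot => .bot
  | .atom p => σ p
  | .and φ ψ => .and (substF σ φ) (substF σ ψ)
  | .neg φ => .neg (substF σ φ)
  | .box α φ => .box (substP σ α) (substF σ φ)
/-- Uniform substitution on programs. -/
def substP (σ : ℕ → Formula) : Program → Program
  | .atom a => .atom a
  | .test τ => .test (substF σ τ)
  | .union α β => .union (substP σ α) (substP σ β)
  | .comp α β => .comp (substP σ α) (substP σ β)
  | .star α => .star (substP σ α)
end

/-- The substitution ρ/x mapping x to ρ and all other atoms to themselves. -/
def substOne (x : ℕ) (ρ : Formula) : ℕ → Formula := fun p => if p = x then ρ else .atom p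

mutual
/-- Occurrence of an atomic proposition in a formula. -/
def occursF (x : ℕ) : Formula → Prop
  | .bot => False
  | .atom p => p = x
  | .and φ ψ => occursF x φ ∨ occursF x ψ
  | .neg φ => occursF x φ
  | .box α φ => occursP x α ∨ occursF x φ
/-- Occurrence of an atomic proposition in a program (including inside tests). -/
def occursP (x : ℕ) : Program → Prop
  | .atom _ => False
  | .test τ => occursF x τ
  | .union α β => occursP x α ∨ occursP x β
  | .comp α β => occursP x α ∨ occursP x β
  | .star α => occursP x α
end

mutual
/-- Vocabulary of a formula: atomic propositions (inl) and atomic programs (inr). -/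
def vocF : Formula → Set (ℕ ⊕ ℕ)
  | .bot => ∅
  | .atom p => {Sum.inl p}
  | .and φ ψ => vocF φ ∪ vocF ψ
  | .neg φ => vocF φ
  | .box α φ => vocP α ∪ vocF φ
def vocP : Program → Set (ℕ ⊕ ℕ)
  | .atom a => {Sum.inr a}
  | .test τ => vocF τ
  | .union α β => vocP α ∪ vocP β
  | .comp α β => vocP α ∪ vocP β
  | .star α => vocP α
end

/-- Shallow tests of a program. -/
def TestsOf : Program → Set Formula
  | .atom _ => ∅
  | .test τ => {τ}
  | .union α β => TestsOf α ∪ TestsOf β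
  | .comp α β => TestsOf α ∪ TestsOf β
  | .star α => TestsOf α

/-- Shallow subprograms of a program. -/
def ProgsOf : Program → Set Program
  | .atom a => {.atom a}
  | .test τ => {.test τ}
  | .union α β => {.union α β} ∪ ProgsOf α ∪ ProgsOf β
  | .comp α β => {.comp α β} ∪ ProgsOf α ∪ ProgsOf β
  | .star α => {.star α} ∪ ProgsOf α

/-- Iterated boxes: □(δ̄, φ) = [δ₁]…[δₙ]φ. -/
def boxes : List Program → Formula → Formula
  | [], φ => φ
  | α :: δ, φ => .box α (boxes δ φ)

/-- Test profiles of a program: subsets of its shallow tests. -/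
def TP (α : Program) : Set (Set Formula) := {ℓ | ℓ ⊆ TestsOf α}

/-- The sets of program lists P^ℓ. -/
def Pfun (ℓ : Set Formula) : Program → Set (List Program)
  | .atom a => {[.atom a]}
  | .test τ => {l | l = [] ∧ τ ∈ ℓ}
  | .union α β => Pfun ℓ α ∪ Pfun ℓ β
  | .comp α β => {l | ∃ δ ∈ Pfun ℓ α, δ ≠ [] ∧ l = δ ++ [β]} ∪ {l | l ∈ Pfun ℓ β ∧ [] ∈ Pfun ℓ α}
  | .star α => {[]} ∪ {l | ∃ δ ∈ Pfun ℓ α, δ ≠ [] ∧ l = δ ++ [.star α]}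

/-- F^ℓ(α): negations of the failed tests. -/
def Ffun (ℓ : Set Formula) (α : Program) : Set Formula :=
  {φ | ∃ τ, τ ∈ TestsOf α ∧ τ ∉ ℓ ∧ φ = Formula.neg τ}

/-- X^ℓ_{α,ψ}. -/
def Xset (ℓ : Set Formula) (α : Program) (ψ : Formula) : Set Formula :=
  Ffun ℓ α ∪ {φ | ∃ δ ∈ Pfun ℓ α, φ = boxes δ ψ}

/-- unfold_□(α, ψ). -/
def unfoldBox (α : Program) (ψ : Formula) : Set (Set Formula) :=
  {Γ | ∃ ℓ ∈ TP α, Γ = Xset ℓ α ψ}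

/-- The function H for diamond unfolding. -/
def Hfun : Program → Set (Set Formula × List Program)
  | .atom a => {(∅, [.atom a])}
  | .test τ => {({τ}, [])}
  | .union α β => Hfun α ∪ Hfun β
  | .comp α β =>
      {p | (∃ X δ, (X, δ) ∈ Hfun α ∧ δ ≠ [] ∧ p = (X, δ ++ [β])) ∨
           (∃ X Y δ, (X, ([] : List Program)) ∈ Hfun α ∧ (Y, δ) ∈ Hfun β ∧ p = (X ∪ Y, δ))}
  | .star α =>
      insert (∅, ([] : List Program))
        {p | ∃ X δ, (X, δ) ∈ Hfun α ∧ δ ≠ [] ∧ p = (X, δ ++ [Program.star α])}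

/-- unfold_◇(α, ψ). -/
def unfoldDiamond (α : Program) (ψ : Formula) : Set (Set Formula) :=
  {Γ | ∃ p ∈ Hfun α, Γ = p.1 ∪ {Formula.neg (boxes p.2 ψ)}}

/-- Saturated sets of formulas. -/
def Saturated (Y : Set Formula) : Prop :=
  (∀ φ, Formula.neg (.neg φ) ∈ Y → φ ∈ Y) ∧
  (∀ φ ψ, Formula.and φ ψ ∈ Y → φ ∈ Y ∧ ψ ∈ Y) ∧
  (∀ φ ψ, Formula.neg (.and φ ψ) ∈ Y → Formula.neg φ ∈ Y ∨ Formula.neg ψ ∈ Y) ∧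
  (∀ α φ, Formula.box α φ ∈ Y → ∃ Δ ∈ unfoldBox α φ, Δ ⊆ Y) ∧
  (∀ α φ, Formula.neg (.box α φ) ∈ Y → ∃ Δ ∈ unfoldDiamond α φ, Δ ⊆ Y)

/-- Single negation. -/
def snegg : Formula → Formula
  | .neg φ => φ
  | φ => .neg φ

mutual
/-- Subformulas of a formula. -/
def subfF : Formula → Set Formula
  | .bot => {.bot}
  | .atom p => {.atom p}
  | .and φ ψ => {.and φ ψ} ∪ subfF φ ∪ subfF ψ
  | .neg φ => {.neg φ} ∪ subfF φ
  | .box α φ => {.box α φ} ∪ subfP α ∪ subfF φ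
/-- Formulas occurring in a program. -/
def subfP : Program → Set Formula
  | .atom _ => ∅
  | .test τ => subfF τ
  | .union α β => subfP α ∪ subfP β
  | .comp α β => subfP α ∪ subfP β
  | .star α => subfP α
end

/-- Fischer-Ladner closed sets. -/
def FLclosed (S : Set Formula) : Prop :=
  (∀ φ ∈ S, snegg φ ∈ S) ∧
  (∀ φ ∈ S, subfF φ ⊆ S) ∧
  (∀ α β φ, Formula.box (.union α β) φ ∈ S → Formula.box α φ ∈ S ∧ Formula.box β φ ∈ S) ∧
  (∀ α β φ, Formula.box (.comp α β) φ ∈ S → Formula.box α (.box β φ) ∈ S) ∧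
  (∀ α φ, Formula.box (.star α) φ ∈ S → Formula.box α (.box (.star α) φ) ∈ S)

/-- Fischer-Ladner closure: the smallest Fischer-Ladner closed superset. -/
def FL (X : Set Formula) : Set Formula := {φ | ∀ S, X ⊆ S → FLclosed S → φ ∈ S}

mutual
def lenF : Formula → ℕ
  | .bot => 1
  | .atom _ => 1
  | .and φ ψ => 1 + lenF φ + lenF ψ
  | .neg φ => 1 + lenF φ
  | .box α φ => 1 + lenP α + lenF φ
/-- Length (size) of a program. -/
def lenP : Program → ℕ
  | .atom _ => 1
  | .test τ => 1 + lenF τ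
  | .union α β => 1 + lenP α + lenP β
  | .comp α β => 1 + lenP α + lenP β
  | .star α => 1 + lenP α
end

/-- Sum of distances along a list of states (consecutive pairs). -/
noncomputable def listSum {W : Type} (d : W → W → ℕ∞) : List W → ℕ∞
  | [] => 0
  | [_] => 0
  | a :: b :: rest => d a b + listSum d (b :: rest)

open Classical in
/-- The α-distance between states. -/
noncomputable def distance {W : Type} (M : KripkeModel W) : Program → W → W → ℕ∞
  | .atom a, v, w => if M.rel a v w then 1 else ⊤
  | .test τ, v, w => if v = w ∧ evaluate M v τ then 0 else ⊤
  | .union α β, v, w => min (distance M α v w) (distance M β v w)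
  | .comp α β, v, w => ⨅ u, distance M α v u + distance M β u w
  | .star α, v, w =>
      ⨅ (l : List W) (_ : l.head? = some v ∧ l.getLast? = some w),
        listSum (fun x y => distance M α x y) l

open Classical in
/-- Distance along a list of programs. -/
noncomputable def distanceSeq {W : Type} (M : KripkeModel W) : List Program → W → W → ℕ∞
  | [], v, w => if v = w then 0 else ⊤
  | α :: δ, v, w => ⨅ u, distance M α v u + distanceSeq M δ u w

/-- The relation Q_α on a type of "states" S carrying formula membership `mem`. -/
def Qprog {S : Type} (mem : Formula → S → Prop) (R : ℕ → S → S → Prop) : Program → S → S → Prop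
  | .atom a => R a
  | .test τ => fun X Y => X = Y ∧ mem τ X
  | .union α β => fun X Y => Qprog mem R α X Y ∨ Qprog mem R β X Y
  | .comp α β => fun X Y => ∃ U, Qprog mem R α X U ∧ Qprog mem R β U Y
  | .star α => Relation.ReflTransGen (fun X Y => Qprog mem R α X Y)

/-- Q along a list of programs, with Id_W (restricted identity) for the empty list. -/
def Qseq {S : Type} (mem : Formula → S → Prop) (R : ℕ → S → S → Prop) (Wset : Set S) :
    List Program → S → S → Prop
  | [] => fun Y Z => Y = Z ∧ Y ∈ Wset
  | α :: δ => fun Y Z => ∃ U, Qprog mem R α Y U ∧ Qseq mem R Wset δ U Z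

/-- A model graph: a Kripke model whose states are locally consistent saturated sets. -/
structure ModelGraph (Wset : Set (Set Formula)) : Type where
  R : ℕ → ↥Wset → ↥Wset → Prop
  saturated : ∀ X : ↥Wset, Saturated X.val
  noBot : ∀ X : ↥Wset, Formula.bot ∉ X.val
  consistent : ∀ (X : ↥Wset) (p : ℕ),
    Formula.atom p ∈ X.val → Formula.neg (Formula.atom p) ∉ X.val
  boxCond : ∀ (X Y : ↥Wset) (a : ℕ) (φ : Formula),
    R a X Y → Formula.box (.atom a) φ ∈ X.val → φ ∈ Y.val
  diaCond : ∀ (X : ↥Wset) (α : Program) (φ : Formula),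
    Formula.neg (.box α φ) ∈ X.val →
      ∃ Y : ↥Wset, Qprog (fun τ Z => τ ∈ Z.val) R α X Y ∧ Formula.neg φ ∈ Y.val

/-- The Kripke model of a model graph; valuation: p holds at X iff p ∈ X. -/
def mgModel {Wset : Set (Set Formula)} (G : ModelGraph Wset) : KripkeModel ↥Wset :=
  ⟨G.R, fun X p => Formula.atom p ∈ X.val⟩

/-!
Each `(X, δ̄) ∈ H_α` whose tests `X` hold at `v` describes a way of running `α` from `v`, so
`d_α(v, w) ≤ d_δ̄(v, w)`. Conversely, infima in `ℕ∞` are attained, so when `d_α(v, w)` is finite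
there is a shortest run of `α` from `v` to `w`; along it one picks, by induction on `α`, the member
of `H_α` that unfolds its first atomic step, and its list distance is at most the run's length.
For `α*` the unfolding skips the leading iterations of `α` that take no step.
-/

section

variable {W : Type} (M : KripkeModel W)

lemma eq_of_distanceSeq_nil_ne_top {v w : W} (h : distanceSeq M [] v w ≠ ⊤) : v = w := by
  by_contra hvw
  simp [distanceSeq, hvw] at h

lemma distanceSeq_nil_self (v : W) : distanceSeq M [] v v = 0 := by
  simp [distanceSeq]

lemma iInf_distanceSeq_nil_add (v : W) (f : W → ℕ∞) :
    ⨅ u, distanceSeq M [] v u + f u = f v := by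
  refine le_antisymm (iInf_le_of_le v (by simp [distanceSeq])) (le_iInf fun u => ?_)
  by_cases hvu : v = u <;> simp [distanceSeq, hvu]

lemma iInf_add_distanceSeq_nil (w : W) (f : W → ℕ∞) :
    ⨅ u, f u + distanceSeq M [] u w = f w := by
  refine le_antisymm (iInf_le_of_le w (by simp [distanceSeq])) (le_iInf fun u => ?_)
  by_cases huw : u = w <;> simp [distanceSeq, huw]

lemma distanceSeq_singleton (γ : Program) (v w : W) :
    distanceSeq M [γ] v w = distance M γ v w :=
  iInf_add_distanceSeq_nil M w (distance M γ v)

lemma distanceSeq_append (l₁ l₂ : List Program) (v w : W) :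
    distanceSeq M (l₁ ++ l₂) v w = ⨅ u, distanceSeq M l₁ v u + distanceSeq M l₂ u w := by
  induction l₁ generalizing v with
  | nil => exact (iInf_distanceSeq_nil_add M v fun u => distanceSeq M l₂ u w).symm
  | cons γ δ ih =>
    simp only [List.cons_append, distanceSeq, ih, ENat.add_iInf, ENat.iInf_add, add_assoc]
    exact iInf_comm

lemma distanceSeq_append_singleton (δ : List Program) (γ : Program) (v w : W) :
    distanceSeq M (δ ++ [γ]) v w = ⨅ u, distanceSeq M δ v u + distance M γ u w := by
  simp only [distanceSeq_append, distanceSeq_singleton]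

lemma distance_star_le_listSum (α : Program) {l : List W} {v w : W}
    (hv : l.head? = some v) (hw : l.getLast? = some w) :
    distance M (.star α) v w ≤ listSum (distance M α) l :=
  iInf₂_le l ⟨hv, hw⟩

lemma distance_star_self (α : Program) (v : W) : distance M (.star α) v v = 0 :=
  nonpos_iff_eq_zero.mp (distance_star_le_listSum M α (l := [v]) rfl rfl)

lemma distance_star_le_add (α : Program) (v u w : W) :
    distance M (.star α) v w ≤ distance M α v u + distance M (.star α) u w := by
  simp only [distance, ENat.add_iInf]
  refine le_iInf₂ fun l ⟨hu, hw⟩ => ?_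
  obtain ⟨a, rest, rfl⟩ := List.exists_cons_of_ne_nil (l := l) (by rintro rfl; simp at hu)
  obtain rfl : a = u := by simpa using hu
  exact distance_star_le_listSum M α (l := v :: a :: rest) rfl
    (by rwa [List.getLast?_cons_cons])

lemma exists_listSum_eq_distance_star (α : Program) {v w : W}
    (h : distance M (.star α) v w ≠ ⊤) :
    ∃ l : List W, l.head? = some v ∧ l.getLast? = some w ∧
      listSum (distance M α) l = distance M (.star α) v w := by
  have hstar : distance M (.star α) v w =
      ⨅ l : {l : List W // l.head? = some v ∧ l.getLast? = some w}, listSum (distance M α) l :=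
    iInf_subtype'
  have : Nonempty {l : List W // l.head? = some v ∧ l.getLast? = some w} := by
    by_contra hempty
    exact h (hstar ▸ iInf_eq_top.mpr fun l => absurd ⟨l⟩ hempty)
  obtain ⟨⟨l, hv, hw⟩, hl⟩ := ENat.exists_eq_iInf
    fun l : {l : List W // l.head? = some v ∧ l.getLast? = some w} => listSum (distance M α) l.1
  exact ⟨l, hv, hw, hl.trans hstar.symm⟩

theorem distance_ne_top_of_relate :
    ∀ (α : Program) {v w : W}, relate M α v w → distance M α v w ≠ ⊤
  | .atom a, v, w, (h : M.rel a v w) => by simp [distance, h]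
  | .test τ, v, _, (⟨rfl, h⟩ : v = _ ∧ evaluate M v τ) => by simp [distance, h]
  | .union α β, v, w, h => by
    rcases h with h | h
    · exact ne_top_of_le_ne_top (distance_ne_top_of_relate α h) (min_le_left _ _)
    · exact ne_top_of_le_ne_top (distance_ne_top_of_relate β h) (min_le_right _ _)
  | .comp α β, v, w, ⟨u, hα, hβ⟩ =>
    ne_top_of_le_ne_top
      (WithTop.add_ne_top.mpr ⟨distance_ne_top_of_relate α hα, distance_ne_top_of_relate β hβ⟩)
      (iInf_le (fun u => distance M α v u + distance M β u w) u)
  | .star α, v, w, h => by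
    induction h using Relation.ReflTransGen.head_induction_on with
    | refl => simp [distance_star_self]
    | head hab _ ih =>
      exact ne_top_of_le_ne_top
        (WithTop.add_ne_top.mpr ⟨distance_ne_top_of_relate α hab, ih⟩)
        (distance_star_le_add M α _ _ _)

theorem distance_le_distanceSeq_of_mem_Hfun :
    ∀ (α : Program) {v : W} {p : Set Formula × List Program}, p ∈ Hfun α →
      (∀ τ ∈ p.1, evaluate M v τ) → ∀ w, distance M α v w ≤ distanceSeq M p.2 v w
  | .atom a, v, _, (rfl : _ = _), _, w => (distanceSeq_singleton M _ v w).ge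
  | .test τ, v, _, (rfl : _ = _), htests, w => by
    by_cases hvw : v = w
    · subst hvw
      simp [distance, distanceSeq, htests τ rfl]
    · simp [distanceSeq, hvw]
  | .union α β, v, p, hp, htests, w => by
    rcases hp with hp | hp
    · exact (min_le_left _ _).trans (distance_le_distanceSeq_of_mem_Hfun α hp htests w)
    · exact (min_le_right _ _).trans (distance_le_distanceSeq_of_mem_Hfun β hp htests w)
  | .comp α β, v, p, hp, htests, w => by
    rcases hp with ⟨X, δ, hα, -, rfl⟩ | ⟨X, Y, δ, hα, hβ, rfl⟩
    · rw [distanceSeq_append_singleton]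
      exact iInf_mono fun u => by
        gcongr
        exact distance_le_distanceSeq_of_mem_Hfun α hα htests u
    · have hαv := distance_le_distanceSeq_of_mem_Hfun α hα (fun τ hτ => htests τ (.inl hτ)) v
      have hβw := distance_le_distanceSeq_of_mem_Hfun β hβ (fun τ hτ => htests τ (.inr hτ)) w
      rw [distanceSeq_nil_self, nonpos_iff_eq_zero] at hαv
      calc distance M (.comp α β) v w ≤ distance M α v v + distance M β v w :=
            iInf_le (fun u => distance M α v u + distance M β u w) v
        _ ≤ distanceSeq M δ v w := by rw [hαv, zero_add]; exact hβw
  | .star α, v, p, hp, htests, w => by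
    rcases hp with rfl | ⟨X, δ, hα, -, rfl⟩
    · by_cases hvw : v = w
      · subst hvw
        simp [distance_star_self, distanceSeq_nil_self]
      · simp [distanceSeq, hvw]
    · rw [distanceSeq_append_singleton]
      refine le_iInf fun u => (distance_star_le_add M α v u w).trans ?_
      gcongr
      exact distance_le_distanceSeq_of_mem_Hfun α hα htests u

lemma exists_mem_Hfun_star_distanceSeq_le_listSum {α : Program}
    (hα : ∀ x y : W, distance M α x y ≠ ⊤ → ∃ p ∈ Hfun α, (∀ τ ∈ p.1, evaluate M x τ) ∧
      distanceSeq M p.2 x y ≤ distance M α x y) :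
    ∀ (l : List W) {v w : W}, l.head? = some v → l.getLast? = some w →
      listSum (distance M α) l ≠ ⊤ → ∃ p ∈ Hfun (.star α), (∀ τ ∈ p.1, evaluate M v τ) ∧
        distanceSeq M p.2 v w ≤ listSum (distance M α) l
  | [], _, _, hv, _, _ => by simp at hv
  | [a], v, w, hv, hw, _ => by
    obtain rfl : a = v := by simpa using hv
    obtain rfl : a = w := by simpa using hw
    exact ⟨(∅, []), .inl rfl, by simp, by simp [distanceSeq_nil_self]⟩
  | a :: b :: rest, v, w, hv, hw, hfin => by
    obtain rfl : a = v := by simpa using hv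
    rw [List.getLast?_cons_cons] at hw
    have hab : distance M α a b ≠ ⊤ := fun h => hfin (by simp [listSum, h])
    have hrest : listSum (distance M α) (b :: rest) ≠ ⊤ := fun h => hfin (by simp [listSum, h])
    obtain ⟨⟨X, δ⟩, hXδ, htests, hδ⟩ := hα a b hab
    rcases eq_or_ne δ [] with rfl | hne
    · obtain rfl : a = b := eq_of_distanceSeq_nil_ne_top M (ne_top_of_le_ne_top hab hδ)
      obtain ⟨p, hp, hptests, hle⟩ :=
        exists_mem_Hfun_star_distanceSeq_le_listSum hα (a :: rest) rfl hw hrest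
      exact ⟨p, hp, hptests, hle.trans le_add_self⟩
    · refine ⟨(X, δ ++ [.star α]), .inr ⟨X, δ, hXδ, hne, rfl⟩, htests, ?_⟩
      calc distanceSeq M (δ ++ [.star α]) a w
          ≤ distanceSeq M δ a b + distance M (.star α) b w := by
            rw [distanceSeq_append_singleton]
            exact iInf_le (fun u => distanceSeq M δ a u + distance M (.star α) u w) b
        _ ≤ distance M α a b + listSum (distance M α) (b :: rest) := by
            gcongr
            exact distance_star_le_listSum M α rfl hw

theorem exists_mem_Hfun_distanceSeq_le :
    ∀ (α : Program) {v w : W}, distance M α v w ≠ ⊤ → ∃ p ∈ Hfun α,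
      (∀ τ ∈ p.1, evaluate M v τ) ∧ distanceSeq M p.2 v w ≤ distance M α v w
  | .atom a, v, w, _ => ⟨(∅, [.atom a]), rfl, by simp, (distanceSeq_singleton M _ v w).le⟩
  | .test τ, v, w, hfin => by
    by_cases h : v = w ∧ evaluate M v τ
    · obtain ⟨rfl, hτ⟩ := h
      exact ⟨({τ}, []), rfl, by simpa using hτ, by simp [distanceSeq_nil_self]⟩
    · simp [distance, h] at hfin
  | .union α β, v, w, hfin => by
    rcases le_total (distance M α v w) (distance M β v w) with hle | hle
    · have hmin : distance M (.union α β) v w = distance M α v w := min_eq_left hle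
      obtain ⟨p, hp, htests, hd⟩ := exists_mem_Hfun_distanceSeq_le α (hmin ▸ hfin)
      exact ⟨p, .inl hp, htests, hmin ▸ hd⟩
    · have hmin : distance M (.union α β) v w = distance M β v w := min_eq_right hle
      obtain ⟨p, hp, htests, hd⟩ := exists_mem_Hfun_distanceSeq_le β (hmin ▸ hfin)
      exact ⟨p, .inr hp, htests, hmin ▸ hd⟩
  | .comp α β, v, w, hfin => by
    have : Nonempty W := ⟨v⟩
    obtain ⟨u, hu⟩ := ENat.exists_eq_iInf fun u => distance M α v u + distance M β u w
    change _ = distance M (.comp α β) v w at hu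
    rw [← hu] at hfin ⊢
    obtain ⟨hαfin, hβfin⟩ := WithTop.add_ne_top.mp hfin
    obtain ⟨⟨X, δ⟩, hX, htests, hδ⟩ := exists_mem_Hfun_distanceSeq_le α hαfin
    rcases eq_or_ne δ [] with rfl | hne
    · obtain rfl : v = u := eq_of_distanceSeq_nil_ne_top M (ne_top_of_le_ne_top hαfin hδ)
      obtain ⟨⟨Y, δ'⟩, hY, htestsY, hδ'⟩ := exists_mem_Hfun_distanceSeq_le β hβfin
      refine ⟨(X ∪ Y, δ'), .inr ⟨X, Y, δ', hX, hY, rfl⟩, ?_, hδ'.trans le_add_self⟩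
      rintro τ (hτ | hτ)
      exacts [htests τ hτ, htestsY τ hτ]
    · refine ⟨(X, δ ++ [β]), .inl ⟨X, δ, hX, hne, rfl⟩, htests, ?_⟩
      rw [distanceSeq_append_singleton]
      exact (iInf_le (fun u => distanceSeq M δ v u + distance M β u w) u).trans (by gcongr)
  | .star α, v, w, hfin => by
    obtain ⟨l, hv, hw, hl⟩ := exists_listSum_eq_distance_star M α hfin
    rw [← hl] at hfin ⊢
    exact exists_mem_Hfun_star_distanceSeq_le_listSum M
      (fun x y => exists_mem_Hfun_distanceSeq_le α) l hv hw hfin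

end

/-- Minimal-distance realization via H. -/
theorem distance_realized {W : Type} (M : KripkeModel W) (α : Program) (v w : W)
    (h : relate M α v w) :
    ∃ p ∈ Hfun α, (∀ τ ∈ p.1, evaluate M v τ) ∧
      distanceSeq M p.2 v w = distance M α v w := by
  obtain ⟨p, hp, htests, hle⟩ :=
    exists_mem_Hfun_distanceSeq_le M α (distance_ne_top_of_relate M α h)
  exact ⟨p, hp, htests, le_antisymm hle (distance_le_distanceSeq_of_mem_Hfun M α hp htests w)⟩
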